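/- Combining the two concentration bounds: with h bounded by ‖h(x)‖² ≤ B and γ bounded by 0 ≤ γ(x) ≤ B, and with independent size-n i.i.d. samples D̃₁ ∼ P₁, D̃₂ ∼ P₂, the empirical quantity D̂ = ‖h̄(D̃₁)−h̄(D̃₂)‖² + γ̄(D̃₁) + γ̄(D̃₂) satisfies Pr(|D̂ − D(P₁,P₂)| > ε) ≤ c₁ exp(−c₂ n ε² / B²) for universal constants c₁, c₂ > 0, where D(P₁,P₂) = ‖E_{P₁}h − E_{P₂}h‖² + E_{P₁}γ + E_{P₂}γ. -/

import Mathlib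

open MeasureTheory ProbabilityTheory Real RealInnerProductSpace

/-! For independent, centred vectors `Z i` with `‖Z i‖ ≤ M` in a Hilbert space, conditioning on a
partial sum `u` and applying Hoeffding's lemma to `⟪u, Z⟫` gives
`E exp (L ‖u + Z‖²) ≤ exp (L M²) · exp ((L + 2 L² M²) ‖u‖²)`. Iterating this over the summands
(the invariant `4 L M² k ≤ 1` survives the growth of `L`) bounds `E exp (L ‖∑ Z i‖²)` by
`exp (1 / 2)` for `L = 1 / (4 n M²)`, which is a dimension-free Hoeffding tail bound; with
`E = ℝ` it also controls the averages of `γ`. All means of `h` lie in the ball of radius `√B`, so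
`|D̂ - D| ≤ 4 √B (‖h̄(D̃₁) - E_{P₁}h‖ + ‖h̄(D̃₂) - E_{P₂}h‖)`
  `+ |γ̄(D̃₁) - E_{P₁}γ| + |γ̄(D̃₂) - E_{P₂}γ|`, and a union bound over these four deviations finishes the proof. -/

section AdjustedDistance

variable {F : Type*} [SeminormedAddCommGroup F]

def adjustedDistance (a₁ a₂ : F) (c₁ c₂ : ℝ) : ℝ := ‖a₁ - a₂‖ ^ 2 + c₁ + c₂

lemma abs_adjustedDistance_sub_le {R : ℝ} {a₁ a₂ m₁ m₂ : F} (ha₁ : ‖a₁‖ ≤ R) (ha₂ : ‖a₂‖ ≤ R)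
    (hm₁ : ‖m₁‖ ≤ R) (hm₂ : ‖m₂‖ ≤ R) (c₁ c₂ d₁ d₂ : ℝ) :
    |adjustedDistance a₁ a₂ c₁ c₂ - adjustedDistance m₁ m₂ d₁ d₂|
      ≤ 4 * R * (‖a₁ - m₁‖ + ‖a₂ - m₂‖) + |c₁ - d₁| + |c₂ - d₂| := by
  have hsum : ‖a₁ - a₂‖ + ‖m₁ - m₂‖ ≤ 4 * R := by
    linarith [norm_sub_le a₁ a₂, norm_sub_le m₁ m₂]
  have hdiff : |‖a₁ - a₂‖ - ‖m₁ - m₂‖| ≤ ‖a₁ - m₁‖ + ‖a₂ - m₂‖ := by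
    refine (abs_norm_sub_norm_le _ _).trans ?_
    rw [show a₁ - a₂ - (m₁ - m₂) = (a₁ - m₁) - (a₂ - m₂) by abel]
    exact norm_sub_le _ _
  have hsq : |‖a₁ - a₂‖ ^ 2 - ‖m₁ - m₂‖ ^ 2| ≤ 4 * R * (‖a₁ - m₁‖ + ‖a₂ - m₂‖) := by
    rw [sq_sub_sq, abs_mul, abs_of_nonneg (by positivity : 0 ≤ ‖a₁ - a₂‖ + ‖m₁ - m₂‖)]
    exact mul_le_mul hsum hdiff (abs_nonneg _)
      (by linarith [norm_nonneg (a₁ - a₂), norm_nonneg (m₁ - m₂)])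
  calc |adjustedDistance a₁ a₂ c₁ c₂ - adjustedDistance m₁ m₂ d₁ d₂|
      = |(‖a₁ - a₂‖ ^ 2 - ‖m₁ - m₂‖ ^ 2) + (c₁ - d₁) + (c₂ - d₂)| := by
        unfold adjustedDistance; ring_nf
    _ ≤ _ := (abs_add_three _ _ _).trans (by gcongr)

variable {Ω : Type*} [MeasurableSpace Ω]

lemma measure_lt_abs_adjustedDistance_sub_le (μ : Measure Ω) {R ε δ₁ δ₂ : ℝ}
    (hδ : 4 * R * (2 * δ₁) + 2 * δ₂ ≤ ε) {a₁ a₂ : Ω → F} {m₁ m₂ : F} {c₁ c₂ : Ω → ℝ} {d₁ d₂ : ℝ}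
    (ha₁ : ∀ ω, ‖a₁ ω‖ ≤ R) (ha₂ : ∀ ω, ‖a₂ ω‖ ≤ R) (hm₁ : ‖m₁‖ ≤ R) (hm₂ : ‖m₂‖ ≤ R) :
    μ {ω | |adjustedDistance (a₁ ω) (a₂ ω) (c₁ ω) (c₂ ω) - adjustedDistance m₁ m₂ d₁ d₂| > ε}
      ≤ μ {ω | δ₁ ≤ ‖a₁ ω - m₁‖} + μ {ω | δ₁ ≤ ‖a₂ ω - m₂‖}
        + μ {ω | δ₂ ≤ ‖c₁ ω - d₁‖} + μ {ω | δ₂ ≤ ‖c₂ ω - d₂‖} := by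
  refine (measure_mono fun ω hω ↦ ?_).trans
    ((measure_union_le _ _).trans (add_le_add_left ((measure_union_le _ _).trans
      (add_le_add_left (measure_union_le _ _) _)) _))
  by_contra hnot
  simp only [Set.mem_union, Set.mem_ofPred_eq, not_or, not_le, Real.norm_eq_abs] at hnot hω
  obtain ⟨⟨⟨h₁, h₂⟩, h₃⟩, h₄⟩ := hnot
  have hR : 0 ≤ R := (norm_nonneg _).trans hm₁
  have hvec : 4 * R * (‖a₁ ω - m₁‖ + ‖a₂ ω - m₂‖) ≤ 4 * R * (2 * δ₁) := by gcongr; linarith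
  linarith [abs_adjustedDistance_sub_le (ha₁ ω) (ha₂ ω) hm₁ hm₂ (c₁ ω) (c₂ ω) d₁ d₂]

lemma norm_inv_natCast_smul_sum_le [NormedSpace ℝ F] {n : ℕ} (hn : 0 < n) {v : Fin n → F} {R : ℝ}
    (hv : ∀ i, ‖v i‖ ≤ R) : ‖(n : ℝ)⁻¹ • ∑ i, v i‖ ≤ R := by
  have hnR : (0 : ℝ) < n := Nat.cast_pos.mpr hn
  rw [norm_smul, norm_inv, Real.norm_natCast, inv_mul_le_iff₀ hnR]
  simpa using (norm_sum_le _ _).trans (Finset.sum_le_card_nsmul Finset.univ _ R fun i _ ↦ hv i)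

end AdjustedDistance

section Concentration

variable {E : Type*} [NormedAddCommGroup E] [InnerProductSpace ℝ E] [CompleteSpace E]
  [SecondCountableTopology E] [MeasurableSpace E] [BorelSpace E]

lemma integral_exp_mul_norm_add_sq_le {ν : Measure E} [IsProbabilityMeasure ν] {L M : ℝ}
    (hL : 0 ≤ L) (hν : ∀ᵐ v ∂ν, ‖v‖ ≤ M) (hmean : ∫ v, v ∂ν = 0) (u : E) :
    ∫ v, exp (L * ‖u + v‖ ^ 2) ∂ν ≤ exp (L * M ^ 2) * exp ((L + 2 * L ^ 2 * M ^ 2) * ‖u‖ ^ 2) := by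
  have hinner : ∀ᵐ v ∂ν, ⟪u, v⟫ ∈ Set.Icc (-(M * ‖u‖)) (M * ‖u‖) := by
    filter_upwards [hν] with v hv
    refine abs_le.mp ((abs_real_inner_le_norm u v).trans ?_)
    nlinarith [norm_nonneg u, norm_nonneg v]
  have hsubG := hasSubgaussianMGF_of_mem_Icc_of_integral_eq_zero
    (by fun_prop : Measurable fun v : E ↦ ⟪u, v⟫).aemeasurable hinner
    (by rw [integral_inner (f := fun v ↦ v) (Integrable.of_bound aestronglyMeasurable_id M hν),
      hmean, inner_zero_right])
  have hmgf : mgf (fun v ↦ ⟪u, v⟫) ν (2 * L) ≤ exp (2 * L ^ 2 * M ^ 2 * ‖u‖ ^ 2) := by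
    refine (hsubG.mgf_le (2 * L)).trans_eq ?_
    congr 1
    push_cast
    rw [Real.norm_eq_abs, div_pow, sq_abs]
    ring
  have hpoint : ∀ᵐ v ∂ν,
      exp (L * ‖u + v‖ ^ 2) ≤ exp (L * ‖u‖ ^ 2 + L * M ^ 2) * exp (2 * L * ⟪u, v⟫) := by
    filter_upwards [hν] with v hv
    rw [← exp_add, exp_le_exp, norm_add_sq_real]
    nlinarith [pow_le_pow_left₀ (norm_nonneg v) hv 2]
  calc ∫ v, exp (L * ‖u + v‖ ^ 2) ∂ν
      ≤ ∫ v, exp (L * ‖u‖ ^ 2 + L * M ^ 2) * exp (2 * L * ⟪u, v⟫) ∂ν :=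
        integral_mono_of_nonneg (ae_of_all _ fun _ ↦ (exp_pos _).le)
          ((hsubG.integrable_exp_mul _).const_mul _) hpoint
    _ = exp (L * ‖u‖ ^ 2 + L * M ^ 2) * mgf (fun v ↦ ⟪u, v⟫) ν (2 * L) := integral_const_mul _ _
    _ ≤ exp (L * ‖u‖ ^ 2 + L * M ^ 2) * exp (2 * L ^ 2 * M ^ 2 * ‖u‖ ^ 2) := by gcongr
    _ = exp (L * M ^ 2) * exp ((L + 2 * L ^ 2 * M ^ 2) * ‖u‖ ^ 2) := by
        rw [← exp_add, ← exp_add]; ring_nf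

variable {Ω : Type*} [MeasurableSpace Ω] {μ : Measure Ω} [IsProbabilityMeasure μ]

lemma integral_exp_mul_norm_add_sq_le_of_indepFun {U V : Ω → E} {L M D : ℝ} (hL : 0 ≤ L)
    (hU : Measurable U) (hV : Measurable V) (hUV : IndepFun U V μ)
    (hUD : ∀ ω, ‖U ω‖ ≤ D) (hVM : ∀ ω, ‖V ω‖ ≤ M) (hV0 : ∫ ω, V ω ∂μ = 0) :
    ∫ ω, exp (L * ‖U ω + V ω‖ ^ 2) ∂μ
      ≤ exp (L * M ^ 2) * ∫ ω, exp ((L + 2 * L ^ 2 * M ^ 2) * ‖U ω‖ ^ 2) ∂μ := by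
  have := Measure.isProbabilityMeasure_map (μ := μ) hV.aemeasurable
  set F : E × E → ℝ := fun p ↦ exp (L * ‖p.1 + p.2‖ ^ 2)
  have hF : Measurable F := by fun_prop
  have hmap := hUV.map_prod_eq_prod_map_map hU.aemeasurable hV.aemeasurable
  have hFint : Integrable F ((μ.map U).prod (μ.map V)) := by
    rw [← hmap, integrable_map_measure hF.aestronglyMeasurable (by fun_prop)]
    refine Integrable.of_bound (by fun_prop) (exp (L * (D + M) ^ 2)) (ae_of_all _ fun ω ↦ ?_)
    rw [Function.comp_apply, Real.norm_of_nonneg (exp_pos _).le, exp_le_exp]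
    gcongr
    exact (norm_add_le _ _).trans (add_le_add (hUD ω) (hVM ω))
  have hVmap : ∀ᵐ v ∂μ.map V, ‖v‖ ≤ M :=
    (ae_map_iff hV.aemeasurable (measurableSet_le (by fun_prop) (by fun_prop))).2 (ae_of_all _ hVM)
  have hVmean : ∫ v, v ∂μ.map V = 0 := by
    rwa [integral_map (f := fun v ↦ v) hV.aemeasurable (by fun_prop)]
  have hUint : Integrable (fun u ↦ exp ((L + 2 * L ^ 2 * M ^ 2) * ‖u‖ ^ 2)) (μ.map U) := by
    rw [integrable_map_measure (by fun_prop) hU.aemeasurable]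
    refine Integrable.of_bound (by fun_prop) (exp ((L + 2 * L ^ 2 * M ^ 2) * D ^ 2))
      (ae_of_all _ fun ω ↦ ?_)
    simp only [Function.comp_apply, Real.norm_of_nonneg (exp_pos _).le, exp_le_exp]
    gcongr
    exact hUD ω
  calc ∫ ω, exp (L * ‖U ω + V ω‖ ^ 2) ∂μ = ∫ u, ∫ v, F (u, v) ∂μ.map V ∂μ.map U := by
        rw [← integral_prod F hFint, ← hmap, integral_map (by fun_prop) hF.aestronglyMeasurable]
    _ ≤ ∫ u, exp (L * M ^ 2) * exp ((L + 2 * L ^ 2 * M ^ 2) * ‖u‖ ^ 2) ∂μ.map U :=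
        integral_mono hFint.integral_prod_left (hUint.const_mul _)
          fun u ↦ integral_exp_mul_norm_add_sq_le hL hVmap hVmean u
    _ = exp (L * M ^ 2) * ∫ ω, exp ((L + 2 * L ^ 2 * M ^ 2) * ‖U ω‖ ^ 2) ∂μ := by
        rw [integral_const_mul, integral_map hU.aemeasurable (by fun_prop)]

lemma integral_exp_mul_norm_sum_sq_le {ι : Type*} {Z : ι → Ω → E} {M : ℝ} (hind : iIndepFun Z μ)
    (hm : ∀ i, Measurable (Z i)) (hb : ∀ i ω, ‖Z i ω‖ ≤ M) (h0 : ∀ i, ∫ ω, Z i ω ∂μ = 0)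
    (s : Finset ι) {L : ℝ} (hL : 0 ≤ L) (hLs : 4 * L * M ^ 2 * s.card ≤ 1) :
    ∫ ω, exp (L * ‖∑ i ∈ s, Z i ω‖ ^ 2) ∂μ ≤ exp (2 * L * M ^ 2 * s.card) := by
  classical
  induction s using Finset.induction_on generalizing L with
  | empty => simp
  | insert a s ha ih =>
    rw [Finset.card_insert_of_notMem ha, Nat.cast_succ] at hLs ⊢
    set c : ℝ := (s.card : ℝ)
    have hLM : 0 ≤ L * M ^ 2 := by positivity
    have hLs' : 4 * (L + 2 * L ^ 2 * M ^ 2) * M ^ 2 * c ≤ 1 := by nlinarith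
    have hsum : ∀ ω, ∑ i ∈ insert a s, Z i ω = ∑ i ∈ s, Z i ω + Z a ω := fun ω ↦ by
      rw [Finset.sum_insert ha, add_comm]
    have hindep : IndepFun (fun ω ↦ ∑ i ∈ s, Z i ω) (Z a) μ := by
      simpa only [Finset.sum_fn] using hind.indepFun_finsetSum_of_notMem hm ha
    have hbound : ∀ ω, ‖∑ i ∈ s, Z i ω‖ ≤ s.card * M := fun ω ↦
      (norm_sum_le _ _).trans (by simpa using Finset.sum_le_card_nsmul s _ M fun i _ ↦ hb i ω)
    calc ∫ ω, exp (L * ‖∑ i ∈ insert a s, Z i ω‖ ^ 2) ∂μ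
        ≤ exp (L * M ^ 2) * ∫ ω, exp ((L + 2 * L ^ 2 * M ^ 2) * ‖∑ i ∈ s, Z i ω‖ ^ 2) ∂μ := by
          simp only [hsum]
          exact integral_exp_mul_norm_add_sq_le_of_indepFun hL (by fun_prop) (hm a) hindep hbound
            (hb a) (h0 a)
      _ ≤ exp (L * M ^ 2) * exp (2 * (L + 2 * L ^ 2 * M ^ 2) * M ^ 2 * c) := by
          gcongr
          exact ih (by positivity) hLs'
      _ ≤ exp (2 * L * M ^ 2 * (c + 1)) := by
          rw [← exp_add, exp_le_exp]
          nlinarith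

lemma measure_le_norm_sum_le {ι : Type*} [Fintype ι] {Z : ι → Ω → E} {M : ℝ}
    (hind : iIndepFun Z μ) (hm : ∀ i, Measurable (Z i)) (hb : ∀ i ω, ‖Z i ω‖ ≤ M)
    (h0 : ∀ i, ∫ ω, Z i ω ∂μ = 0) {t : ℝ} (ht : 0 ≤ t) :
    μ {ω | t ≤ ‖∑ i, Z i ω‖}
      ≤ ENNReal.ofReal (exp (1 / 2) * exp (-t ^ 2 / (4 * Fintype.card ι * M ^ 2))) := by
  set n : ℝ := (Fintype.card ι : ℝ)
  set L : ℝ := (4 * n * M ^ 2)⁻¹ with hLdef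
  have hL : 0 ≤ L := by positivity
  have hLn : 4 * L * M ^ 2 * n ≤ 1 := by
    rw [show 4 * L * M ^ 2 * n = (4 * n * M ^ 2) * (4 * n * M ^ 2)⁻¹ by ring]
    exact mul_inv_le_one
  have hbound : ∀ ω, ‖∑ i, Z i ω‖ ≤ n * M := fun ω ↦ by
    have := (norm_sum_le _ _).trans (Finset.sum_le_card_nsmul Finset.univ _ M fun i _ ↦ hb i ω)
    rwa [Finset.card_univ, nsmul_eq_mul] at this
  have hint : Integrable (fun ω ↦ exp (L * ‖∑ i, Z i ω‖ ^ 2)) μ := by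
    refine Integrable.of_bound (by fun_prop) (exp (L * (n * M) ^ 2)) (ae_of_all _ fun ω ↦ ?_)
    rw [Real.norm_of_nonneg (exp_pos _).le, exp_le_exp]
    gcongr
    exact hbound ω
  have hmgf : mgf (fun ω ↦ ‖∑ i, Z i ω‖ ^ 2) μ L ≤ exp (1 / 2) := by
    refine (integral_exp_mul_norm_sum_sq_le hind hm hb h0 Finset.univ hL (by simpa)).trans ?_
    rw [exp_le_exp, Finset.card_univ]
    linarith
  have hmarkov := measure_ge_le_exp_mul_mgf (t ^ 2) hL hint
  calc μ {ω | t ≤ ‖∑ i, Z i ω‖} ≤ μ {ω | t ^ 2 ≤ ‖∑ i, Z i ω‖ ^ 2} :=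
        measure_mono (Set.ofPred_subset_ofPred.2 fun _ hω ↦ pow_le_pow_left₀ ht hω 2)
    _ = ENNReal.ofReal (μ.real {ω | t ^ 2 ≤ ‖∑ i, Z i ω‖ ^ 2}) :=
        (ofReal_measureReal (measure_ne_top _ _)).symm
    _ ≤ ENNReal.ofReal (exp (-L * t ^ 2) * exp (1 / 2)) := by
        gcongr
        exact hmarkov.trans (by gcongr)
    _ = ENNReal.ofReal (exp (1 / 2) * exp (-t ^ 2 / (4 * n * M ^ 2))) := by
        rw [mul_comm, hLdef, neg_mul, neg_div, div_eq_inv_mul (t ^ 2)]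

lemma measure_le_norm_empiricalMean_sub_integral_le {X : Type*} [MeasurableSpace X] {n : ℕ}
    (hn : 0 < n) {Y : Fin n → Ω → X} (hY : ∀ i, Measurable (Y i)) (hind : iIndepFun Y μ)
    {P : Measure X} [IsProbabilityMeasure P] (hP : ∀ i, μ.map (Y i) = P) {f : X → E}
    (hf : Measurable f) {R : ℝ} (hR : 0 < R) (hfR : ∀ x, ‖f x‖ ≤ R) {s : ℝ} (hs : 0 ≤ s) :
    μ {ω | s * R ≤ ‖(n : ℝ)⁻¹ • ∑ i, f (Y i ω) - ∫ x, f x ∂P‖}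
      ≤ ENNReal.ofReal (exp (1 / 2) * exp (-(n * s ^ 2) / 16)) := by
  set m := ∫ x, f x ∂P
  have hnR : (0 : ℝ) < n := Nat.cast_pos.mpr hn
  have hm : ‖m‖ ≤ R := by
    simpa using norm_integral_le_of_norm_le_const (μ := P) (ae_of_all _ hfR)
  have hZind : iIndepFun (fun i ω ↦ f (Y i ω) - m) μ :=
    hind.comp (fun _ x ↦ f x - m) fun _ ↦ hf.sub_const m
  have hZb : ∀ i ω, ‖f (Y i ω) - m‖ ≤ 2 * R := fun i ω ↦
    (norm_sub_le _ _).trans (by linarith [hfR (Y i ω)])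
  have hZ0 : ∀ i, ∫ ω, (f (Y i ω) - m) ∂μ = 0 := fun i ↦ by
    have hint : Integrable (fun ω ↦ f (Y i ω)) μ :=
      Integrable.of_bound (hf.comp (hY i)).aestronglyMeasurable R (ae_of_all _ fun ω ↦ hfR _)
    rw [integral_sub hint (integrable_const m), integral_const, probReal_univ, one_smul,
      ← integral_map (hY i).aemeasurable hf.aestronglyMeasurable, hP i, sub_self]
  have hcentre : ∀ ω, (n : ℝ)⁻¹ • ∑ i, f (Y i ω) - m = (n : ℝ)⁻¹ • ∑ i, (f (Y i ω) - m) := by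
    intro ω
    rw [Finset.sum_sub_distrib, smul_sub, Finset.sum_const, Finset.card_univ, Fintype.card_fin,
      ← Nat.cast_smul_eq_nsmul ℝ, inv_smul_smul₀ hnR.ne']
  calc μ {ω | s * R ≤ ‖(n : ℝ)⁻¹ • ∑ i, f (Y i ω) - m‖}
      = μ {ω | n * (s * R) ≤ ‖∑ i, (f (Y i ω) - m)‖} := by
        simp only [hcentre, norm_smul, norm_inv, Real.norm_natCast, le_inv_mul_iff₀ hnR]
    _ ≤ ENNReal.ofReal (exp (1 / 2) * exp (-(n * (s * R)) ^ 2 / (4 * n * (2 * R) ^ 2))) := by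
        simpa using measure_le_norm_sum_le hZind (fun i ↦ (hf.comp (hY i)).sub_const m) hZb hZ0
          (by positivity)
    _ = ENNReal.ofReal (exp (1 / 2) * exp (-(n * s ^ 2) / 16)) := by
        congr 3
        field_simp
        ring

end Concentration

/-- Combined concentration: there are universal constants c₁, c₂ > 0 such that
the empirical adjusted distance D̂ = ‖h̄(D̃₁)−h̄(D̃₂)‖² + γ̄(D̃₁) + γ̄(D̃₂)
concentrates around D(P₁,P₂) = ‖E_{P₁}h − E_{P₂}h‖² + E_{P₁}γ + E_{P₂}γ. -/
theorem adjusted_distance_concentration :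
    ∃ c₁ c₂ : ℝ, 0 < c₁ ∧ 0 < c₂ ∧
      ∀ (X : Type) (_ : MeasurableSpace X) (k n : ℕ), 0 < n →
      ∀ (h : X → EuclideanSpace ℝ (Fin k)), Measurable h →
      ∀ (γ : X → ℝ), Measurable γ →
      ∀ B : ℝ, 0 < B → (∀ x, ‖h x‖ ^ 2 ≤ B) → (∀ x, 0 ≤ γ x) → (∀ x, γ x ≤ B) →
      ∀ (Ω : Type) (_ : MeasureSpace Ω), IsProbabilityMeasure (ℙ : Measure Ω) →
      ∀ (P₁ P₂ : Measure X), IsProbabilityMeasure P₁ → IsProbabilityMeasure P₂ →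
      ∀ (Y : Fin n ⊕ Fin n → Ω → X), (∀ i, Measurable (Y i)) →
      iIndepFun Y ℙ →
      (∀ i : Fin n, Measure.map (Y (Sum.inl i)) ℙ = P₁) →
      (∀ i : Fin n, Measure.map (Y (Sum.inr i)) ℙ = P₂) →
      ∀ ε : ℝ, 0 < ε →
      ℙ {ω | |(‖(n : ℝ)⁻¹ • ∑ i : Fin n, h (Y (Sum.inl i) ω)
                - (n : ℝ)⁻¹ • ∑ i : Fin n, h (Y (Sum.inr i) ω)‖ ^ 2
              + (n : ℝ)⁻¹ * ∑ i : Fin n, γ (Y (Sum.inl i) ω)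
              + (n : ℝ)⁻¹ * ∑ i : Fin n, γ (Y (Sum.inr i) ω))
            - (‖(∫ x, h x ∂P₁) - ∫ x, h x ∂P₂‖ ^ 2
              + (∫ x, γ x ∂P₁) + ∫ x, γ x ∂P₂)| > ε}
        ≤ ENNReal.ofReal (c₁ * Real.exp (-(c₂ * n * ε ^ 2) / B ^ 2)) := by
  refine ⟨4 * exp (1 / 2), 1 / 1600, by positivity, by norm_num, ?_⟩
  intro X _ k n hn h hh γ hγ B hB hhB hγ0 hγB Ω _ _ P₁ P₂ _ _ Y hY hYind hY₁ hY₂ ε hε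
  have hhR (x : X) : ‖h x‖ ≤ √B := Real.le_sqrt_of_sq_le (hhB x)
  have hγR (x : X) : ‖γ x‖ ≤ B := by rw [Real.norm_of_nonneg (hγ0 x)]; exact hγB x
  have hmean (P : Measure X) [IsProbabilityMeasure P] : ‖∫ x, h x ∂P‖ ≤ √B := by
    simpa using norm_integral_le_of_norm_le_const (μ := P) (ae_of_all _ hhR)
  -- thresholds `s √B` for the `h`-deviations and `s B` for the `γ`-deviations make all four tail
  -- bounds equal to `exp (1 / 2) * exp (-n ε² / (1600 B²))`
  set s := ε / (10 * B)
  have hs : 0 ≤ s := by positivity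
  have hsplit : 4 * √B * (2 * (s * √B)) + 2 * (s * B) ≤ ε := by
    rw [show 4 * √B * (2 * (s * √B)) = 8 * s * (√B * √B) by ring, Real.mul_self_sqrt hB.le]
    simp only [s]; field_simp; norm_num
  refine (measure_lt_abs_adjustedDistance_sub_le ℙ hsplit
    (fun ω ↦ norm_inv_natCast_smul_sum_le hn fun i ↦ hhR (Y (Sum.inl i) ω))
    (fun ω ↦ norm_inv_natCast_smul_sum_le hn fun i ↦ hhR (Y (Sum.inr i) ω))
    (hmean P₁) (hmean P₂)).trans ?_
  have hY₁ind := hYind.precomp Sum.inl_injective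
  have hY₂ind := hYind.precomp Sum.inr_injective
  set q := ENNReal.ofReal (exp (1 / 2) * exp (-(n * s ^ 2) / 16))
  have h₁ : ℙ _ ≤ q := measure_le_norm_empiricalMean_sub_integral_le hn (fun _ ↦ hY _) hY₁ind
    hY₁ hh (sqrt_pos.mpr hB) hhR hs
  have h₂ : ℙ _ ≤ q := measure_le_norm_empiricalMean_sub_integral_le hn (fun _ ↦ hY _) hY₂ind
    hY₂ hh (sqrt_pos.mpr hB) hhR hs
  have h₃ : ℙ _ ≤ q := measure_le_norm_empiricalMean_sub_integral_le hn (fun _ ↦ hY _) hY₁ind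
    hY₁ hγ hB hγR hs
  have h₄ : ℙ _ ≤ q := measure_le_norm_empiricalMean_sub_integral_le hn (fun _ ↦ hY _) hY₂ind
    hY₂ hγ hB hγR hs
  have hexp : -(n * s ^ 2) / 16 = -(1 / 1600 * n * ε ^ 2) / B ^ 2 := by
    simp only [s]; field_simp; ring
  calc _ ≤ q + q + q + q := add_le_add (add_le_add (add_le_add h₁ h₂) h₃) h₄
    _ = _ := by rw [← hexp, mul_assoc, ENNReal.ofReal_mul (by norm_num), ENNReal.ofReal_ofNat]; ring
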